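/- The encoding of GCD-morphic sequences by sequences satisfying (C1) is a bijection: the map sending a positive-valued sequence c satisfying (C1) to the sequence F(n) = ∏_{j ∣ n} c(j) is a bijection between sequences satisfying (C1) and GCD-morphic sequences. -/

import Mathlib

/-!
Split the divisors of `m` into those that divide `n`, which are the divisors of `gcd m n`, and
the others; by (C1) the leftover parts of `∏_{d ∣ m} c d` and `∏_{d ∣ n} c d` are coprime, so
`gcd (F m) (F n) = F (gcd m n)`. Injectivity is Möbius inversion.

For surjectivity, `c` is recovered from a GCD-morphic `F` by the recursion
`c n = F n / ∏_{d ∣ n, d < n} c d`. The division is exact by strong induction: below `n` the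
product formula holds, hence so does (C1), since a common factor of `c a` and `c b` times
`F (gcd a b)` divides `gcd (F a) (F b) = F (gcd a b)`. With (C1) available, the product of `c`
over any divisor-closed set divides every common multiple of the `F d`, `d` in the set: adding
the largest element `a` multiplies the product by `c a`, which is coprime to everything in the
set except the divisors of `a`.
-/

namespace GCDMorphic

open Finset ArithmeticFunction
open scoped ArithmeticFunction.Moebius

variable {c F : ℕ → ℕ}

theorem coprime_of_not_dvd_of_not_dvd
    (hc : ∀ k n, 0 < k → k < n → ¬ k ∣ n → Nat.Coprime (c n) (c k))
    {a b : ℕ} (ha : 0 < a) (hb : 0 < b) (hab : ¬ a ∣ b) (hba : ¬ b ∣ a) :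
    Nat.Coprime (c a) (c b) := by
  rcases lt_trichotomy a b with h | rfl | h
  · exact (hc a b ha h hab).symm
  · exact absurd dvd_rfl hab
  · exact hc b a hb h hba

theorem filter_dvd_divisors_eq_divisors_gcd {m n : ℕ} (hm : m ≠ 0) (hn : n ≠ 0) :
    {d ∈ m.divisors | d ∣ n} = (m.gcd n).divisors := by
  ext d
  simp [Nat.dvd_gcd_iff, hm, hn]

theorem gcd_prod_divisors (hc : ∀ k n, 0 < k → k < n → ¬ k ∣ n → Nat.Coprime (c n) (c k))
    {m n : ℕ} (hm : m ≠ 0) (hn : n ≠ 0) :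
    Nat.gcd (∏ d ∈ m.divisors, c d) (∏ d ∈ n.divisors, c d) = ∏ d ∈ (m.gcd n).divisors, c d := by
  have hcop : Nat.Coprime (∏ i ∈ m.divisors with ¬ i ∣ n, c i)
      (∏ j ∈ n.divisors with ¬ j ∣ m, c j) :=
    Nat.Coprime.prod_left fun i hi => Nat.Coprime.prod_right fun j hj => by
      simp only [mem_filter, Nat.mem_divisors] at hi hj
      exact coprime_of_not_dvd_of_not_dvd hc (Nat.pos_of_dvd_of_pos hi.1.1 (by omega))
        (Nat.pos_of_dvd_of_pos hj.1.1 (by omega)) (fun h => hi.2 (h.trans hj.1.1))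
        (fun h => hj.2 (h.trans hi.1.1))
  rw [← prod_filter_mul_prod_filter_not m.divisors (· ∣ n),
    ← prod_filter_mul_prod_filter_not n.divisors (· ∣ m),
    filter_dvd_divisors_eq_divisors_gcd hm hn, filter_dvd_divisors_eq_divisors_gcd hn hm,
    Nat.gcd_comm n m, Nat.gcd_mul_left, hcop, mul_one]

theorem eq_of_prod_divisors_eq {c' : ℕ → ℕ} (hc : ∀ n, 0 < n → c n ≠ 0)
    (hc' : ∀ n, 0 < n → c' n ≠ 0)
    (h : ∀ n : ℕ, ∏ d ∈ n.divisors, c d = ∏ d ∈ n.divisors, c' d) {n : ℕ} (hn : 0 < n) :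
    c n = c' n := by
  have inversion (f : ℕ → ℕ) (hf : ∀ n, 0 < n → f n ≠ 0) :
      ∏ x ∈ n.divisorsAntidiagonal, ((∏ d ∈ x.2.divisors, f d : ℕ) : ℚ) ^ μ x.1 = f n := by
    refine (prod_eq_iff_prod_pow_moebius_eq_of_nonzero (f := fun n => (f n : ℚ))
      (g := fun n => ((∏ d ∈ n.divisors, f d : ℕ) : ℚ)) (fun n hn => ?_) (fun n hn => ?_)).1
      (fun n _ => by push_cast; rfl) n hn
    · exact_mod_cast hf n hn
    · exact_mod_cast prod_ne_zero_iff.2 fun d hd => hf d (Nat.pos_of_mem_divisors hd)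
  have hcn := inversion c hc
  simp only [h] at hcn
  exact_mod_cast hcn.symm.trans (inversion c' hc')

theorem mul_prod_divisors_dvd_prod_divisors {g x : ℕ} (hx : x ≠ 0) (hgx : g ∣ x)
    (hxg : ¬ x ∣ g) : c x * ∏ d ∈ g.divisors, c d ∣ ∏ d ∈ x.divisors, c d := by
  rw [← prod_insert fun h => hxg (Nat.dvd_of_mem_divisors h)]
  exact prod_dvd_prod_of_subset _ _ _
    (insert_subset (Nat.mem_divisors_self x hx) (Nat.divisors_subset_of_dvd hx hgx))

theorem prod_dvd_of_prod_divisors_dvd {S : Finset ℕ} {N : ℕ} (h0 : 0 ∉ S)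
    (hS : ∀ d ∈ S, d.divisors ⊆ S)
    (hc : ∀ k ∈ S, ∀ n ∈ S, k < n → ¬ k ∣ n → Nat.Coprime (c n) (c k))
    (hN : ∀ d ∈ S, ∏ e ∈ d.divisors, c e ∣ N) : ∏ d ∈ S, c d ∣ N := by
  induction S using Finset.induction_on_max with
  | empty => simp
  | insert a s hlt ih =>
    have ha : a ≠ 0 := fun h => h0 (h ▸ mem_insert_self a s)
    have hs : ∀ d ∈ s, d.divisors ⊆ s := fun d hd e he =>
      (mem_insert.1 (hS d (mem_insert_of_mem hd) he)).resolve_left fun hea =>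
        (Nat.divisor_le he).not_gt (hea ▸ hlt d hd)
    have hdiv : {d ∈ s | d ∣ a} = a.properDivisors := by
      ext d
      simp only [mem_filter, Nat.mem_properDivisors]
      refine ⟨fun ⟨hd, hda⟩ => ⟨hda, hlt d hd⟩, fun ⟨hda, hlt'⟩ => ⟨?_, hda⟩⟩
      have := hS a (mem_insert_self a s) (Nat.mem_divisors.2 ⟨hda, ha⟩)
      exact (mem_insert.1 this).resolve_left hlt'.ne
    have hs0 : ∏ d ∈ s, c d ∣ N :=
      ih (fun h => h0 (mem_insert_of_mem h)) hs
        (fun k hk n hn => hc k (mem_insert_of_mem hk) n (mem_insert_of_mem hn))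
        (fun d hd => hN d (mem_insert_of_mem hd))
    have ha0 := hN a (mem_insert_self a s)
    rw [← Nat.cons_self_properDivisors ha, prod_cons, mul_comm] at ha0
    rw [prod_insert fun h => (hlt a h).false]
    rw [← prod_filter_mul_prod_filter_not s (· ∣ a), hdiv] at ⊢ hs0
    set P := ∏ d ∈ a.properDivisors, c d
    set R := ∏ d ∈ s with ¬ d ∣ a, c d
    have hcop : Nat.Coprime (c a) R := Nat.Coprime.prod_right fun d hd => by
      rw [mem_filter] at hd
      exact hc d (mem_insert_of_mem hd.1) a (mem_insert_self a s) (hlt d hd.1) hd.2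
    calc c a * (P * R) = Nat.lcm (P * c a) (P * R) := by
          rw [Nat.lcm_mul_left, hcop.lcm_eq_mul, mul_left_comm]
      _ ∣ N := Nat.lcm_dvd ha0 hs0

def primitivePart (F : ℕ → ℕ) (n : ℕ) : ℕ :=
  F n / ∏ d ∈ n.properDivisors.attach, primitivePart F d
decreasing_by exact (Nat.mem_properDivisors.1 d.2).2

theorem primitivePart_eq (F : ℕ → ℕ) (n : ℕ) :
    primitivePart F n = F n / ∏ d ∈ n.properDivisors, primitivePart F d := by
  rw [primitivePart, prod_attach]

section

variable (hF : ∀ m n, 0 < m → 0 < n → Nat.gcd (F m) (F n) = F (Nat.gcd m n))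
include hF

theorem apply_dvd_apply {m n : ℕ} (hm : 0 < m) (hn : 0 < n) (hmn : m ∣ n) : F m ∣ F n := by
  rw [← Nat.gcd_eq_left hmn, ← hF m n hm hn]
  exact Nat.gcd_dvd_right _ _

theorem coprime_of_prod_divisors_eq (hpos : ∀ n, 0 < n → 0 < F n) {k n : ℕ} (hk : 0 < k)
    (hkn : k < n) (hd : ¬ k ∣ n)
    (hprod : ∀ m, 0 < m → m ≤ n → ∏ d ∈ m.divisors, c d = F m) :
    Nat.Coprime (c n) (c k) := by
  have hn : 0 < n := hk.trans hkn
  have hg : 0 < n.gcd k := Nat.gcd_pos_of_pos_right n hk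
  have hgn : n.gcd k ≤ n := Nat.le_of_dvd hn (Nat.gcd_dvd_left n k)
  have hn' : c n * F (n.gcd k) ∣ F n := by
    rw [← hprod n hn le_rfl, ← hprod _ hg hgn]
    exact mul_prod_divisors_dvd_prod_divisors hn.ne' (Nat.gcd_dvd_left n k)
      fun h => hkn.not_ge (Nat.le_of_dvd hk (h.trans (Nat.gcd_dvd_right n k)))
  have hk' : c k * F (n.gcd k) ∣ F k := by
    rw [← hprod k hk hkn.le, ← hprod _ hg hgn]
    exact mul_prod_divisors_dvd_prod_divisors hk.ne' (Nat.gcd_dvd_right n k)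
      fun h => hd (h.trans (Nat.gcd_dvd_left n k))
  have hdvd : Nat.gcd (c n) (c k) * F (n.gcd k) ∣ 1 * F (n.gcd k) :=
    calc _ ∣ Nat.gcd (F n) (F k) :=
          Nat.dvd_gcd ((mul_dvd_mul_right (Nat.gcd_dvd_left _ _) _).trans hn')
            ((mul_dvd_mul_right (Nat.gcd_dvd_right _ _) _).trans hk')
      _ = 1 * F (n.gcd k) := by rw [one_mul, hF n k hn hk]
  exact Nat.dvd_one.1 ((Nat.mul_dvd_mul_iff_right (hpos _ hg)).1 hdvd)

theorem prod_divisors_primitivePart (hpos : ∀ n, 0 < n → 0 < F n) {n : ℕ} (hn : 0 < n) :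
    ∏ d ∈ n.divisors, primitivePart F d = F n := by
  induction n using Nat.strong_induction_on with
  | _ n ih =>
  have hcop : ∀ k ∈ n.properDivisors, ∀ m ∈ n.properDivisors, k < m → ¬ k ∣ m →
      Nat.Coprime (primitivePart F m) (primitivePart F k) := fun k hk m hm hkm hd =>
    coprime_of_prod_divisors_eq hF hpos (Nat.pos_of_mem_properDivisors hk) hkm hd
      fun j hj hjm => ih j (hjm.trans_lt (Nat.mem_properDivisors.1 hm).2) hj
  have hdvd : ∏ d ∈ n.properDivisors, primitivePart F d ∣ F n := by
    refine prod_dvd_of_prod_divisors_dvd (fun h => (Nat.pos_of_mem_properDivisors h).false)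
      (fun d hd => ?_) hcop fun d hd => ?_
    all_goals obtain ⟨hdn, hlt⟩ := Nat.mem_properDivisors.1 hd
    · exact Nat.divisors_subset_properDivisors hn.ne' hdn hlt.ne
    · have hd0 := Nat.pos_of_mem_properDivisors hd
      rw [ih d hlt hd0]
      exact apply_dvd_apply hF hd0 hn hdn
  rw [← Nat.cons_self_properDivisors hn.ne', prod_cons, primitivePart_eq F n,
    Nat.div_mul_cancel hdvd]

theorem primitivePart_pos (hpos : ∀ n, 0 < n → 0 < F n) {n : ℕ} (hn : 0 < n) :
    0 < primitivePart F n :=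
  Nat.pos_of_dvd_of_pos (prod_divisors_primitivePart hF hpos hn ▸
    dvd_prod_of_mem _ (Nat.mem_divisors_self n hn.ne')) (hpos n hn)

theorem coprime_primitivePart (hpos : ∀ n, 0 < n → 0 < F n) {k n : ℕ} (hk : 0 < k)
    (hkn : k < n) (hd : ¬ k ∣ n) :
    Nat.Coprime (primitivePart F n) (primitivePart F k) :=
  coprime_of_prod_divisors_eq hF hpos hk hkn hd fun _ hm _ =>
    prod_divisors_primitivePart hF hpos hm

end

end GCDMorphic

open GCDMorphic in
theorem gcd_morphic_encoding_bijection :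
    ∃ e : {c : ℕ → ℕ // c 0 = 1 ∧ (∀ j, 1 ≤ j → 0 < c j) ∧
            (∀ k n, 1 ≤ k → k < n → Nat.gcd n k ≠ k → Nat.gcd (c n) (c k) = 1)} ≃
          {F : ℕ → ℕ // F 0 = 1 ∧ (∀ n, 1 ≤ n → 0 < F n) ∧
            (∀ n m, 1 ≤ n → 1 ≤ m → Nat.gcd (F n) (F m) = F (Nat.gcd n m))},
      ∀ c n, (e c).val n = ∏ j ∈ n.divisors, c.val j := by
  refine ⟨Equiv.ofBijective (fun c => ⟨fun n => ∏ j ∈ n.divisors, c.val j, by simp,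
      fun n hn => Finset.prod_pos fun j hj => c.2.2.1 j (Nat.pos_of_mem_divisors hj),
      fun m n hm hn => gcd_prod_divisors (fun k n hk hkn hd =>
        c.2.2.2 k n hk hkn (mt Nat.gcd_eq_right_iff_dvd.1 hd)) (Nat.one_le_iff_ne_zero.1 hm)
        (Nat.one_le_iff_ne_zero.1 hn)⟩) ⟨?_, ?_⟩,
    fun _ _ => rfl⟩
  · intro c c' h
    refine Subtype.ext (funext fun n => ?_)
    rcases n.eq_zero_or_pos with rfl | hn
    · rw [c.2.1, c'.2.1]
    · exact eq_of_prod_divisors_eq (fun n hn => (c.2.2.1 n hn).ne')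
        (fun n hn => (c'.2.2.1 n hn).ne') (fun n => congrFun (congrArg Subtype.val h) n) hn
  · rintro ⟨F, hF0, hpos, hF⟩
    have hc0 : primitivePart F 0 = 1 := by rw [primitivePart_eq]; simp [hF0]
    refine ⟨⟨primitivePart F, hc0, fun _ => primitivePart_pos hF hpos,
      fun k n hk hkn hd => coprime_primitivePart hF hpos hk hkn
        (mt Nat.gcd_eq_right_iff_dvd.2 hd)⟩, Subtype.ext (funext fun n => ?_)⟩
    rcases n.eq_zero_or_pos with rfl | hn
    · simp [hF0]
    · exact prod_divisors_primitivePart hF hpos hn
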